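/- arXiv:math/0510040 — 2 statements merged into one kernel-verified Lean document; each statement's English description precedes it below -/
import Mathlib

section
/- Let H be a Hopf algebra. The set Z²_L(H) of normalized convolution-invertible lazy left 2-cocycles on H is closed under convolution product, the convolution inverse of a lazy 2-cocycle is again a lazy 2-cocycle, and hence Z²_L(H) is a group under convolution. -/
open TensorProduct

noncomputable section

universe u

section Defs

variable {k : Type u} [CommRing k] {H : Type u} [Ring H] [Bialgebra k H]

/-- Convolution product on the dual of a coalgebra. -/
def conv {C : Type u} [AddCommGroup C] [Module k C] [Coalgebra k C]
    (f g : C →ₗ[k] k) : C →ₗ[k] k :=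
  LinearMap.mul' k k ∘ₗ TensorProduct.map f g ∘ₗ Coalgebra.comul

/-- `a ⊗ b ↦ a · ε(b)`. -/
def pr1 : H ⊗[k] H →ₗ[k] H :=
  (TensorProduct.rid k H).toLinearMap ∘ₗ TensorProduct.map LinearMap.id Coalgebra.counit

/-- `a ⊗ (b ⊗ c) ↦ ε(a) · (b ⊗ c)`. -/
def dropL3 : H ⊗[k] (H ⊗[k] H) →ₗ[k] H ⊗[k] H :=
  (TensorProduct.lid k (H ⊗[k] H)).toLinearMap ∘ₗ TensorProduct.map Coalgebra.counit LinearMap.id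

/-- Multiplication of `H` as a linear map `H ⊗ H → H`. -/
def mulH : H ⊗[k] H →ₗ[k] H := LinearMap.mul' k H

/-- `σ` is normalized: `σ(1,h) = ε(h) = σ(h,1)`. -/
def Normalized (σ : H ⊗[k] H →ₗ[k] k) : Prop :=
  ∀ h : H, σ (1 ⊗ₜ[k] h) = Coalgebra.counit (R := k) h ∧
    σ (h ⊗ₜ[k] 1) = Coalgebra.counit (R := k) h

/-- Left 2-cocycle condition: `σ(a₁,b₁)σ(a₂b₂,c) = σ(b₁,c₁)σ(a,b₂c₂)`, expressed as an
equality of linear functionals on `H ⊗ (H ⊗ H)` (convolution of the indicated factors). -/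
def IsLeftCocycle (σ : H ⊗[k] H →ₗ[k] k) : Prop :=
  conv (σ ∘ₗ TensorProduct.map LinearMap.id pr1)
      (σ ∘ₗ TensorProduct.map mulH LinearMap.id ∘ₗ (TensorProduct.assoc k H H H).symm.toLinearMap)
  = conv (σ ∘ₗ dropL3) (σ ∘ₗ TensorProduct.map LinearMap.id mulH)

/-- Right 2-cocycle condition: `σ(a₁b₁,c)σ(a₂,b₂) = σ(a,b₁c₁)σ(b₂,c₂)`. -/
def IsRightCocycle (σ : H ⊗[k] H →ₗ[k] k) : Prop :=
  conv (σ ∘ₗ TensorProduct.map mulH LinearMap.id ∘ₗ (TensorProduct.assoc k H H H).symm.toLinearMap)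
      (σ ∘ₗ TensorProduct.map LinearMap.id pr1)
  = conv (σ ∘ₗ TensorProduct.map LinearMap.id mulH) (σ ∘ₗ dropL3)

/-- Laziness for `σ : H ⊗ H → k`: `σ(h₁,h'₁)h₂h'₂ = h₁h'₁σ(h₂,h'₂)`. -/
def IsLazy2 (σ : H ⊗[k] H →ₗ[k] k) : Prop :=
  (TensorProduct.lid k H).toLinearMap ∘ₗ TensorProduct.map σ mulH ∘ₗ Coalgebra.comul
  = (TensorProduct.rid k H).toLinearMap ∘ₗ TensorProduct.map mulH σ ∘ₗ Coalgebra.comul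

/-- Laziness for `γ : H → k`: `γ(h₁)h₂ = h₁γ(h₂)`. -/
def IsLazy1 (γ : H →ₗ[k] k) : Prop :=
  (TensorProduct.lid k H).toLinearMap ∘ₗ TensorProduct.map γ LinearMap.id ∘ₗ Coalgebra.comul
  = (TensorProduct.rid k H).toLinearMap ∘ₗ TensorProduct.map LinearMap.id γ ∘ₗ Coalgebra.comul

/-- Neatness: `σ(a,b₁)σ(b₂,c) = σ(b₁,c)σ(a,b₂)`. -/
def Neat2 (σ : H ⊗[k] H →ₗ[k] k) : Prop :=
  conv (σ ∘ₗ TensorProduct.map LinearMap.id pr1) (σ ∘ₗ dropL3)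
  = conv (σ ∘ₗ dropL3) (σ ∘ₗ TensorProduct.map LinearMap.id pr1)

/-- `a ⊗ (b ⊗ (c ⊗ d)) ↦ ε(a) (b ⊗ (c ⊗ d))`. -/
def dropL4 : H ⊗[k] (H ⊗[k] (H ⊗[k] H)) →ₗ[k] H ⊗[k] (H ⊗[k] H) :=
  (TensorProduct.lid k (H ⊗[k] (H ⊗[k] H))).toLinearMap ∘ₗ
    TensorProduct.map Coalgebra.counit LinearMap.id

/-- `(a,b,c,d) ↦ σ(ab, c) ε(d)`. -/
def fPure (σ : H ⊗[k] H →ₗ[k] k) : H ⊗[k] (H ⊗[k] (H ⊗[k] H)) →ₗ[k] k :=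
  σ ∘ₗ TensorProduct.map mulH LinearMap.id ∘ₗ (TensorProduct.assoc k H H H).symm.toLinearMap ∘ₗ
    TensorProduct.map LinearMap.id (TensorProduct.map LinearMap.id pr1)

/-- `(a,b,c,d) ↦ ε(a) τ(b, c) ε(d)`. -/
def gPure (τ : H ⊗[k] H →ₗ[k] k) : H ⊗[k] (H ⊗[k] (H ⊗[k] H)) →ₗ[k] k :=
  τ ∘ₗ TensorProduct.map LinearMap.id pr1 ∘ₗ dropL4

/-- `(a,b,c,d) ↦ ε(a) σ(b, cd)`. -/
def hPure (σ : H ⊗[k] H →ₗ[k] k) : H ⊗[k] (H ⊗[k] (H ⊗[k] H)) →ₗ[k] k :=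
  σ ∘ₗ TensorProduct.map LinearMap.id mulH ∘ₗ dropL4

/-- Purity for a map `σ` with convolution inverse `τ = σ⁻¹`:
`σ(ab₁,c₁)σ⁻¹(b₂,c₂)σ(b₃,c₃d) = σ(b₁,c₁d)σ⁻¹(b₂,c₂)σ(ab₃,c₃)`. -/
def Pure2 (σ τ : H ⊗[k] H →ₗ[k] k) : Prop :=
  conv (C := H ⊗[k] (H ⊗[k] (H ⊗[k] H))) (conv (fPure σ) (gPure τ)) (hPure σ)
  = conv (C := H ⊗[k] (H ⊗[k] (H ⊗[k] H))) (conv (hPure σ) (gPure τ)) (fPure σ)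

/-- `D¹(γ)(h,h') = γ(h₁)γ(h'₁)γinv(h₂h'₂)` where `γinv` is the convolution inverse of `γ`. -/
def D1 (γ γinv : H →ₗ[k] k) : H ⊗[k] H →ₗ[k] k :=
  conv (LinearMap.mul' k k ∘ₗ TensorProduct.map γ γ) (γinv ∘ₗ mulH)

/-- The deformed product `h ·σ h' = σ(h₁,h'₁) h₂h'₂`. -/
def mulSig (σ : H ⊗[k] H →ₗ[k] k) : H ⊗[k] H →ₗ[k] H :=
  (TensorProduct.lid k H).toLinearMap ∘ₗ TensorProduct.map σ mulH ∘ₗ Coalgebra.comul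

/-- Neatness for `γ : H → k`: `γ(ab₁)γ(b₂c) = γ(b₁c)γ(ab₂)`. -/
def Neat1 (γ : H →ₗ[k] k) : Prop :=
  conv (γ ∘ₗ mulH ∘ₗ TensorProduct.map LinearMap.id pr1) (γ ∘ₗ mulH ∘ₗ dropL3)
  = conv (γ ∘ₗ mulH ∘ₗ dropL3) (γ ∘ₗ mulH ∘ₗ TensorProduct.map LinearMap.id pr1)

/-- `γ ∈ Reg¹(H)`: normalized and convolution invertible. -/
def Reg1 (γ : H →ₗ[k] k) : Prop :=
  γ 1 = 1 ∧ ∃ δ : H →ₗ[k] k, conv γ δ = (Coalgebra.counit : H →ₗ[k] k) ∧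
    conv δ γ = (Coalgebra.counit : H →ₗ[k] k)

/-- `σ ∈ Reg²(H)`: normalized and convolution invertible. -/
def Reg2 (σ : H ⊗[k] H →ₗ[k] k) : Prop :=
  Normalized σ ∧ ∃ τ : H ⊗[k] H →ₗ[k] k,
    conv σ τ = (Coalgebra.counit : H ⊗[k] H →ₗ[k] k) ∧
    conv τ σ = (Coalgebra.counit : H ⊗[k] H →ₗ[k] k)

/-- `a ⊗ b ↦ γ(a b₁) b₂`. -/
def stmt17L (γ : H →ₗ[k] k) : H ⊗[k] H →ₗ[k] H :=
  (TensorProduct.lid k H).toLinearMap ∘ₗ TensorProduct.map (γ ∘ₗ mulH) LinearMap.id ∘ₗ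
    (TensorProduct.assoc k H H H).symm.toLinearMap ∘ₗ
      TensorProduct.map LinearMap.id Coalgebra.comul

/-- `a ⊗ b ↦ γ(a b₂) b₁`. -/
def stmt17R (γ : H →ₗ[k] k) : H ⊗[k] H →ₗ[k] H :=
  (TensorProduct.lid k H).toLinearMap ∘ₗ TensorProduct.map (γ ∘ₗ mulH) LinearMap.id ∘ₗ
    (TensorProduct.assoc k H H H).symm.toLinearMap ∘ₗ
      TensorProduct.map LinearMap.id
        ((TensorProduct.comm k H H).toLinearMap ∘ₗ Coalgebra.comul)

end Defs

/-!
Everything takes place in convolution monoids `WithConv (C →ₗ[k] A)`. Precomposition with a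
coalgebra map and postcomposition with an algebra map are monoid homomorphisms, so normalization
reads `σ ∘ (1 ⊗ -) = 1 = σ ∘ (- ⊗ 1)`, laziness says that `σ`, viewed as `H`-valued, commutes with
the multiplication `m`, and the cocycle condition reads `(σ ∘ d₃)(σ ∘ d₁) = (σ ∘ d₀)(σ ∘ d₂)` for
the face maps `dᵢ` of the bar complex. Normalization and laziness then survive products and
inverses for formal reasons. For the cocycle condition the extra input is that, for lazy `τ`,
`τ ∘ d₃` commutes with every `g ∘ d₁` and `τ ∘ d₀` with every `g ∘ d₂`: up to reassociation the
relevant `H ⊗ H`-valued maps are `τ ⊗ 1`, `m ⊗ id` and `1 ⊗ τ`, `id ⊗ m`, and `τ ⋆ m = m ⋆ τ`.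
With these commutations two cocycle identities multiply, and inverting one and commuting its
factors back yields the cocycle identity of the inverse.
-/

open WithConv

section Monoid

variable {M : Type*} [Monoid M]

theorem mul_mul_mul_eq_of_commute {a₁ b₁ c₁ d₁ a₂ b₂ c₂ d₂ : M}
    (h₁ : a₁ * b₁ = c₁ * d₁) (h₂ : a₂ * b₂ = c₂ * d₂) (ha : Commute a₂ b₁) (hc : Commute c₂ d₁) :
    a₁ * a₂ * (b₁ * b₂) = c₁ * c₂ * (d₁ * d₂) := by
  rw [ha.mul_mul_mul_comm, h₁, h₂, hc.mul_mul_mul_comm]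

theorem mul_eq_mul_of_inverses {a b c d a' b' c' d' : M} (h : a * b = c * d)
    (ha : a' * a = 1) (hb : b' * b = 1) (hc : c * c' = 1) (hd : d * d' = 1) :
    b' * a' = d' * c' :=
  calc b' * a' = b' * a' * (c * d * (d' * c')) := by
        rw [mul_assoc c, ← mul_assoc d, hd, one_mul, hc, mul_one]
    _ = b' * a' * (a * b) * (d' * c') := by rw [h, ← mul_assoc]
    _ = d' * c' := by rw [mul_assoc b', ← mul_assoc a', ha, one_mul, hb, one_mul]

end Monoid

theorem tmul_algebraMap {R A B : Type*} [CommSemiring R] [Semiring A] [Algebra R A] [Semiring B]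
    [Algebra R B] (x : A) (r : R) :
    x ⊗ₜ[R] algebraMap R B r = (algebraMap R A r * x) ⊗ₜ[R] (1 : B) := by
  rw [Algebra.algebraMap_eq_smul_one, TensorProduct.tmul_smul, TensorProduct.smul_tmul',
    Algebra.smul_def]

namespace LinearMap

variable {R A B C D : Type*} [CommSemiring R] [AddCommMonoid C] [Module R C] [Coalgebra R C]
  [AddCommMonoid D] [Module R D] [Coalgebra R D] [Semiring A] [Algebra R A]
  [Semiring B] [Algebra R B]

def convPrecomp (φ : D →ₗc[R] C) : WithConv (C →ₗ[R] A) →* WithConv (D →ₗ[R] A) where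
  toFun f := toConv (f.ofConv ∘ₗ φ.toLinearMap)
  map_one' := by simp [convOne_def, comp_assoc]
  map_mul' f g := by ext1; exact convMul_comp_coalgHom_distrib f g φ

def convPostcomp (h : A →ₐ[R] B) : WithConv (C →ₗ[R] A) →* WithConv (C →ₗ[R] B) where
  toFun f := toConv (h.toLinearMap ∘ₗ f.ofConv)
  map_one' := by ext; simp [convOne_def]
  map_mul' f g := by ext1; exact algHom_comp_convMul_distrib h f g

lemma convPrecomp_toConv (φ : D →ₗc[R] C) (f : C →ₗ[R] A) :
    convPrecomp φ (toConv f) = toConv (f ∘ₗ φ.toLinearMap) := rfl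

lemma toConv_counit : toConv (Coalgebra.counit : C →ₗ[R] R) = 1 := by
  ext; simp

lemma commute_toConv_map {f h : WithConv (C →ₗ[R] A)} {g k : WithConv (D →ₗ[R] B)}
    (hfh : Commute f h) (hgk : Commute g k) :
    Commute (toConv (TensorProduct.map f.ofConv g.ofConv))
      (toConv (TensorProduct.map h.ofConv k.ofConv)) := by
  rw [Commute, SemiconjBy, TensorProduct.map_convMul_map, TensorProduct.map_convMul_map,
    hfh.eq, hgk.eq]

variable {V : Type*} [Semiring V] [Algebra R V]

lemma ofConv_convPostcomp_ofId_mul (f : WithConv (C →ₗ[R] R)) (F : C →ₗ[R] V) :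
    (convPostcomp (Algebra.ofId R V) f * toConv F).ofConv =
      (TensorProduct.lid R V).toLinearMap ∘ₗ TensorProduct.map f.ofConv F ∘ₗ Coalgebra.comul := by
  have h : mul' R V ∘ₗ TensorProduct.map (convPostcomp (Algebra.ofId R V) f).ofConv F =
      (TensorProduct.lid R V).toLinearMap ∘ₗ TensorProduct.map f.ofConv F := by
    ext x y
    simp [convPostcomp, Algebra.smul_def]
  rw [convMul_def, ofConv_toConv, ← comp_assoc, h, comp_assoc]

lemma ofConv_mul_convPostcomp_ofId (f : WithConv (C →ₗ[R] R)) (F : C →ₗ[R] V) :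
    (toConv F * convPostcomp (Algebra.ofId R V) f).ofConv =
      (TensorProduct.rid R V).toLinearMap ∘ₗ TensorProduct.map F f.ofConv ∘ₗ Coalgebra.comul := by
  have h : mul' R V ∘ₗ TensorProduct.map F (convPostcomp (Algebra.ofId R V) f).ofConv =
      (TensorProduct.rid R V).toLinearMap ∘ₗ TensorProduct.map F f.ofConv := by
    ext x y
    simp [convPostcomp, Algebra.smul_def, Algebra.commutes]
  rw [convMul_def, ofConv_toConv, ← comp_assoc, h, comp_assoc]

lemma mul_toConv_comp (f : WithConv (C →ₗ[R] R)) (F : C →ₗ[R] V) (g : V →ₗ[R] R) :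
    f * toConv (g ∘ₗ F) = toConv (g ∘ₗ (convPostcomp (Algebra.ofId R V) f * toConv F).ofConv) := by
  rw [ofConv_convPostcomp_ofId_mul, convMul_def]
  congr 1
  simp only [← comp_assoc]
  congr 1
  ext x y
  simp

lemma toConv_comp_mul (f : WithConv (C →ₗ[R] R)) (F : C →ₗ[R] V) (g : V →ₗ[R] R) :
    toConv (g ∘ₗ F) * f = toConv (g ∘ₗ (toConv F * convPostcomp (Algebra.ofId R V) f).ofConv) := by
  rw [ofConv_mul_convPostcomp_ofId, convMul_def]
  congr 1
  simp only [← comp_assoc]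
  congr 1
  ext x y
  simp [mul_comm]

lemma commute_toConv_comp {f : WithConv (C →ₗ[R] R)} {F : C →ₗ[R] V}
    (h : Commute (convPostcomp (Algebra.ofId R V) f) (toConv F)) (g : V →ₗ[R] R) :
    Commute f (toConv (g ∘ₗ F)) := by
  rw [Commute, SemiconjBy, mul_toConv_comp, toConv_comp_mul, h.eq]

end LinearMap

open LinearMap

section LazyCocycles

variable {k : Type u} [CommRing k] {H : Type u} [Ring H] [Bialgebra k H]

variable (k H)

def barFace₀ : H ⊗[k] (H ⊗[k] H) →ₗc[k] H ⊗[k] H :=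
  (Coalgebra.TensorProduct.lid k (H ⊗[k] H)).toCoalgHom.comp
    (Coalgebra.TensorProduct.map (Coalgebra.counitCoalgHom k H) (CoalgHom.id k (H ⊗[k] H)))

def barFace₁ : H ⊗[k] (H ⊗[k] H) →ₗc[k] H ⊗[k] H :=
  (Coalgebra.TensorProduct.map (Bialgebra.mulCoalgHom k H) (CoalgHom.id k H)).comp
    (Coalgebra.TensorProduct.assoc k k H H H).symm.toCoalgHom

def barFace₂ : H ⊗[k] (H ⊗[k] H) →ₗc[k] H ⊗[k] H :=
  Coalgebra.TensorProduct.map (CoalgHom.id k H) (Bialgebra.mulCoalgHom k H)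

def barFace₃ : H ⊗[k] (H ⊗[k] H) →ₗc[k] H ⊗[k] H :=
  Coalgebra.TensorProduct.map (CoalgHom.id k H)
    ((Coalgebra.TensorProduct.rid k k H).toCoalgHom.comp
      (Coalgebra.TensorProduct.map (CoalgHom.id k H) (Coalgebra.counitCoalgHom k H)))

def oneTmulCoalgHom : H →ₗc[k] H ⊗[k] H :=
  (Coalgebra.TensorProduct.map (Bialgebra.unitBialgHom k H : k →ₗc[k] H) (CoalgHom.id k H)).comp
    (Coalgebra.TensorProduct.lid k H).symm.toCoalgHom

def tmulOneCoalgHom : H →ₗc[k] H ⊗[k] H :=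
  (Coalgebra.TensorProduct.map (CoalgHom.id k H) (Bialgebra.unitBialgHom k H : k →ₗc[k] H)).comp
    (Coalgebra.TensorProduct.rid k k H).symm.toCoalgHom

variable {k H}

@[simp] lemma oneTmulCoalgHom_apply (h : H) : oneTmulCoalgHom k H h = 1 ⊗ₜ h := by
  simp [oneTmulCoalgHom]

@[simp] lemma tmulOneCoalgHom_apply (h : H) : tmulOneCoalgHom k H h = h ⊗ₜ 1 := by
  simp [tmulOneCoalgHom]

lemma toConv_conv {C : Type u} [AddCommGroup C] [Module k C] [Coalgebra k C]
    (f g : C →ₗ[k] k) : toConv (conv f g) = toConv f * toConv g := rfl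

lemma conv_eq_counit_iff {C : Type u} [AddCommGroup C] [Module k C] [Coalgebra k C]
    (f g : C →ₗ[k] k) : conv f g = Coalgebra.counit ↔ toConv f * toConv g = 1 := by
  rw [← toConv_conv, ← toConv_counit, toConv_injective.eq_iff]

lemma normalized_iff (σ : H ⊗[k] H →ₗ[k] k) :
    Normalized σ ↔ convPrecomp (oneTmulCoalgHom k H) (toConv σ) = 1 ∧
      convPrecomp (tmulOneCoalgHom k H) (toConv σ) = 1 := by
  simp only [Normalized, ← toConv_counit, convPrecomp_toConv, toConv_injective.eq_iff,
    LinearMap.ext_iff, forall_and]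
  simp

lemma isLazy2_iff_commute (σ : H ⊗[k] H →ₗ[k] k) :
    IsLazy2 σ ↔ Commute (convPostcomp (Algebra.ofId k H) (toConv σ)) (toConv mulH) := by
  rw [commute_iff_eq, ← ofConv_injective.eq_iff, ofConv_convPostcomp_ofId_mul,
    ofConv_mul_convPostcomp_ofId]
  rfl

lemma isLeftCocycle_iff (σ : H ⊗[k] H →ₗ[k] k) :
    IsLeftCocycle σ ↔
      convPrecomp (barFace₃ k H) (toConv σ) * convPrecomp (barFace₁ k H) (toConv σ) =
        convPrecomp (barFace₀ k H) (toConv σ) * convPrecomp (barFace₂ k H) (toConv σ) :=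
  ⟨WithConv.ext, congrArg ofConv⟩

lemma IsLazy2.commute_barFace₃_barFace₁ {τ : H ⊗[k] H →ₗ[k] k} (hτ : IsLazy2 τ)
    (g : H ⊗[k] H →ₗ[k] k) :
    Commute (convPrecomp (barFace₃ k H) (toConv τ)) (convPrecomp (barFace₁ k H) (toConv g)) := by
  refine commute_toConv_comp ?_ g
  have hτ₃ : convPostcomp (Algebra.ofId k (H ⊗[k] H)) (convPrecomp (barFace₃ k H) (toConv τ)) =
      convPrecomp (Coalgebra.TensorProduct.assoc k k H H H).symm.toCoalgHom
        (toConv (TensorProduct.map (convPostcomp (Algebra.ofId k H) (toConv τ)).ofConv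
          (1 : WithConv (H →ₗ[k] H)).ofConv)) := by
    ext a b c
    simp [convPostcomp, convPrecomp, barFace₃, tmul_algebraMap]
  rw [hτ₃]
  exact (commute_toConv_map ((isLazy2_iff_commute τ).1 hτ)
    (Commute.one_left (toConv LinearMap.id))).map (convPrecomp _)

lemma IsLazy2.commute_barFace₀_barFace₂ {τ : H ⊗[k] H →ₗ[k] k} (hτ : IsLazy2 τ)
    (g : H ⊗[k] H →ₗ[k] k) :
    Commute (convPrecomp (barFace₀ k H) (toConv τ)) (convPrecomp (barFace₂ k H) (toConv g)) := by
  refine commute_toConv_comp ?_ g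
  have hτ₀ : convPostcomp (Algebra.ofId k (H ⊗[k] H)) (convPrecomp (barFace₀ k H) (toConv τ)) =
      toConv (TensorProduct.map (1 : WithConv (H →ₗ[k] H)).ofConv
        (convPostcomp (Algebra.ofId k H) (toConv τ)).ofConv) := by
    ext a b c
    simp [convPostcomp, convPrecomp, barFace₀, tmul_algebraMap, ← map_mul, mul_comm]
  rw [hτ₀]
  exact commute_toConv_map (Commute.one_left (toConv LinearMap.id)) ((isLazy2_iff_commute τ).1 hτ)

variable {σ τ : H ⊗[k] H →ₗ[k] k}

theorem reg2_iff : Reg2 σ ↔ Normalized σ ∧ IsUnit (toConv σ) := by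
  simp only [Reg2, conv_eq_counit_iff, isUnit_iff_exists, toConv_surjective.exists]

theorem Normalized.conv (hσ : Normalized σ) (hτ : Normalized τ) : Normalized (conv σ τ) := by
  rw [normalized_iff] at hσ hτ ⊢
  simp only [toConv_conv, map_mul, hσ.1, hσ.2, hτ.1, hτ.2, mul_one, and_self]

theorem Normalized.of_mul_eq_one (hσ : Normalized σ) (h : toConv τ * toConv σ = 1) :
    Normalized τ := by
  rw [normalized_iff] at hσ ⊢
  constructor
  · simpa [hσ.1] using congrArg (convPrecomp (oneTmulCoalgHom k H)) h
  · simpa [hσ.2] using congrArg (convPrecomp (tmulOneCoalgHom k H)) h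

theorem Reg2.conv (hσ : Reg2 σ) (hτ : Reg2 τ) : Reg2 (conv σ τ) := by
  rw [reg2_iff, toConv_conv] at *
  exact ⟨hσ.1.conv hτ.1, hσ.2.mul hτ.2⟩

theorem Reg2.of_mul_eq_one (hσ : Reg2 σ) (h₁ : toConv σ * toConv τ = 1)
    (h₂ : toConv τ * toConv σ = 1) : Reg2 τ := by
  rw [reg2_iff] at hσ ⊢
  exact ⟨hσ.1.of_mul_eq_one h₂, isUnit_iff_exists.2 ⟨toConv σ, h₂, h₁⟩⟩

theorem IsLazy2.conv (hσ : IsLazy2 σ) (hτ : IsLazy2 τ) : IsLazy2 (conv σ τ) := by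
  rw [isLazy2_iff_commute] at hσ hτ ⊢
  rw [toConv_conv, map_mul]
  exact hσ.mul_left hτ

theorem IsLazy2.of_mul_eq_one (hσ : IsLazy2 σ) (h₁ : toConv σ * toConv τ = 1)
    (h₂ : toConv τ * toConv σ = 1) : IsLazy2 τ := by
  rw [isLazy2_iff_commute] at hσ ⊢
  let u : (WithConv (H ⊗[k] H →ₗ[k] k))ˣ := ⟨toConv σ, toConv τ, h₁, h₂⟩
  exact Commute.units_inv_left (u := Units.map (convPostcomp (Algebra.ofId k H)) u) hσ

theorem IsLeftCocycle.conv (hσ : IsLeftCocycle σ) (hτ : IsLeftCocycle τ) (hτl : IsLazy2 τ) :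
    IsLeftCocycle (conv σ τ) := by
  rw [isLeftCocycle_iff] at hσ hτ ⊢
  simp only [toConv_conv, map_mul]
  exact mul_mul_mul_eq_of_commute hσ hτ (hτl.commute_barFace₃_barFace₁ σ)
    (hτl.commute_barFace₀_barFace₂ σ)

theorem IsLeftCocycle.of_mul_eq_one (hσ : IsLeftCocycle σ) (hτ : IsLazy2 τ)
    (h₁ : toConv σ * toConv τ = 1) (h₂ : toConv τ * toConv σ = 1) : IsLeftCocycle τ := by
  rw [isLeftCocycle_iff] at hσ ⊢
  have inv_mul (φ : H ⊗[k] (H ⊗[k] H) →ₗc[k] H ⊗[k] H) :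
      convPrecomp φ (toConv τ) * convPrecomp φ (toConv σ) = 1 := by rw [← map_mul, h₂, map_one]
  have mul_inv (φ : H ⊗[k] (H ⊗[k] H) →ₗc[k] H ⊗[k] H) :
      convPrecomp φ (toConv σ) * convPrecomp φ (toConv τ) = 1 := by rw [← map_mul, h₁, map_one]
  calc _ = convPrecomp (barFace₁ k H) (toConv τ) * convPrecomp (barFace₃ k H) (toConv τ) :=
        (hτ.commute_barFace₃_barFace₁ τ).eq
    _ = convPrecomp (barFace₂ k H) (toConv τ) * convPrecomp (barFace₀ k H) (toConv τ) :=
        mul_eq_mul_of_inverses hσ (inv_mul _) (inv_mul _) (mul_inv _) (mul_inv _)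
    _ = _ := (hτ.commute_barFace₀_barFace₂ τ).eq.symm

theorem reg2_counit : Reg2 (Coalgebra.counit : H ⊗[k] H →ₗ[k] k) := by
  rw [reg2_iff, normalized_iff, toConv_counit, map_one, map_one]
  exact ⟨⟨rfl, rfl⟩, isUnit_one⟩

theorem isLazy2_counit : IsLazy2 (Coalgebra.counit : H ⊗[k] H →ₗ[k] k) := by
  rw [isLazy2_iff_commute, toConv_counit, map_one]
  exact Commute.one_left _

theorem isLeftCocycle_counit : IsLeftCocycle (Coalgebra.counit : H ⊗[k] H →ₗ[k] k) := by
  rw [isLeftCocycle_iff, toConv_counit]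
  simp only [map_one]

end LazyCocycles

/-- `Z²_L(H)` is a group under convolution: the counit is a normalized lazy 2-cocycle, the
convolution of two normalized convolution-invertible lazy 2-cocycles is again a lazy
2-cocycle, and the convolution inverse of a lazy 2-cocycle is a lazy 2-cocycle. -/
theorem stmt5 {k : Type u} [Field k] {H : Type u} [Ring H] [HopfAlgebra k H] :
    (Reg2 (Coalgebra.counit : H ⊗[k] H →ₗ[k] k) ∧
      IsLazy2 (Coalgebra.counit : H ⊗[k] H →ₗ[k] k) ∧
      IsLeftCocycle (Coalgebra.counit : H ⊗[k] H →ₗ[k] k)) ∧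
    (∀ σ τ : H ⊗[k] H →ₗ[k] k, Reg2 σ → IsLazy2 σ → IsLeftCocycle σ →
      Reg2 τ → IsLazy2 τ → IsLeftCocycle τ →
      Reg2 (conv σ τ) ∧ IsLazy2 (conv σ τ) ∧ IsLeftCocycle (conv σ τ)) ∧
    (∀ σ τ : H ⊗[k] H →ₗ[k] k, Reg2 σ → IsLazy2 σ → IsLeftCocycle σ →
      conv σ τ = (Coalgebra.counit : H ⊗[k] H →ₗ[k] k) →
      conv τ σ = (Coalgebra.counit : H ⊗[k] H →ₗ[k] k) →
      Reg2 τ ∧ IsLazy2 τ ∧ IsLeftCocycle τ) := by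
  refine ⟨⟨reg2_counit, isLazy2_counit, isLeftCocycle_counit⟩,
    fun σ τ hσr hσl hσc hτr hτl hτc => ⟨hσr.conv hτr, hσl.conv hτl, hσc.conv hτc hτl⟩, ?_⟩
  intro σ τ hσr hσl hσc hστ hτσ
  rw [conv_eq_counit_iff] at hστ hτσ
  have hτl : IsLazy2 τ := hσl.of_mul_eq_one hστ hτσ
  exact ⟨hσr.of_mul_eq_one hστ hτσ, hτl, hσc.of_mul_eq_one hτl hστ hτσ⟩

end
end

section
/- Let C be a strict monoidal category with a pure-braided structure (A,B), and define D_{U,V} := A_{U,I,V} = B_{U,I,V}. Then D is a natural isomorphism satisfying D_{I,X} = D_{X,I} = id_X and (D_{X,Y}⊗id_Z⊗id_T)(id_X⊗D_{Y⊗Z,T})(D_{X⊗Y,Z}⊗id_T) = (id_X⊗id_Y⊗D_{Z,T})(D_{X,Y⊗Z}⊗id_T)(id_X⊗D_{Y,Z⊗T}) for all objects X,Y,Z,T. -/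
open CategoryTheory MonoidalCategory

universe v u

/-- A monoidal category is strict when the associators and unitors are `eqToHom`s of
equalities of objects. -/
structure MonStrict (C : Type u) [Category.{v} C] [MonoidalCategory C] : Prop where
  assocObj : ∀ X Y Z : C, (X ⊗ Y) ⊗ Z = X ⊗ (Y ⊗ Z)
  lidObj : ∀ X : C, 𝟙_ C ⊗ X = X
  ridObj : ∀ X : C, X ⊗ 𝟙_ C = X
  assocHom : ∀ X Y Z : C, (α_ X Y Z).hom = eqToHom (assocObj X Y Z)
  lidHom : ∀ X : C, (λ_ X).hom = eqToHom (lidObj X)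
  ridHom : ∀ X : C, (ρ_ X).hom = eqToHom (ridObj X)

variable {C : Type u} [Category.{v} C] [MonoidalCategory C]

/-- Transport of an endomorphism along an equality of objects of a strict monoidal
category. -/
def cE {X Y : C} (h : X = Y) (f : Y ⟶ Y) : X ⟶ X := eqToHom h ≫ f ≫ eqToHom h.symm

/-- A pure-braided structure on a strict monoidal category: two families of natural
isomorphisms `A, B : U ⊗ V ⊗ W ≅ U ⊗ V ⊗ W` satisfying the pure-braided axioms. -/
structure PureBraided (C : Type u) [Category.{v} C] [MonoidalCategory C]
    (hS : MonStrict C) where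
  A : ∀ U V W : C, U ⊗ (V ⊗ W) ≅ U ⊗ (V ⊗ W)
  B : ∀ U V W : C, U ⊗ (V ⊗ W) ≅ U ⊗ (V ⊗ W)
  natA : ∀ {U V W U' V' W' : C} (f : U ⟶ U') (g : V ⟶ V') (h : W ⟶ W'),
    (f ⊗ₘ (g ⊗ₘ h)) ≫ (A U' V' W').hom = (A U V W).hom ≫ (f ⊗ₘ (g ⊗ₘ h))
  natB : ∀ {U V W U' V' W' : C} (f : U ⟶ U') (g : V ⟶ V') (h : W ⟶ W'),
    (f ⊗ₘ (g ⊗ₘ h)) ≫ (B U' V' W').hom = (B U V W).hom ≫ (f ⊗ₘ (g ⊗ₘ h))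
  /-- `A_{U⊗V,W,X} = A_{U,V⊗W,X}(id_U ⊗ A_{V,W,X})` -/
  a1 : ∀ U V W X : C, (A (U ⊗ V) W X).hom =
    cE (by simp [hS.assocObj]) ((𝟙 U ⊗ₘ (A V W X).hom) ≫
      cE (by simp [hS.assocObj]) (A U (V ⊗ W) X).hom)
  /-- `A_{U,V,W⊗X} = (A_{U,V,W} ⊗ id_X) A_{U,V⊗W,X}` -/
  a2 : ∀ U V W X : C, (A U V (W ⊗ X)).hom =
    cE (by simp [hS.assocObj]) ((cE (by simp [hS.assocObj]) (A U (V ⊗ W) X).hom) ≫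
      ((A U V W).hom ⊗ₘ 𝟙 X))
  /-- `B_{U⊗V,W,X} = (id_U ⊗ B_{V,W,X}) B_{U,V⊗W,X}` -/
  baba : ∀ U V W X : C, (B (U ⊗ V) W X).hom =
    cE (by simp [hS.assocObj]) ((cE (by simp [hS.assocObj]) (B U (V ⊗ W) X).hom) ≫
      (𝟙 U ⊗ₘ (B V W X).hom))
  /-- `B_{U,V,W⊗X} = B_{U,V⊗W,X}(B_{U,V,W} ⊗ id_X)` -/
  b2 : ∀ U V W X : C, (B U V (W ⊗ X)).hom =
    cE (by simp [hS.assocObj]) (((B U V W).hom ⊗ₘ 𝟙 X) ≫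
      cE (by simp [hS.assocObj]) (B U (V ⊗ W) X).hom)
  /-- `(A_{U,V,W} ⊗ id_X)(id_U ⊗ B_{V,W,X}) = (id_U ⊗ B_{V,W,X})(A_{U,V,W} ⊗ id_X)` -/
  cab : ∀ U V W X : C,
    cE (by simp [hS.assocObj]) (𝟙 U ⊗ₘ (B V W X).hom) ≫ ((A U V W).hom ⊗ₘ 𝟙 X)
    = ((A U V W).hom ⊗ₘ 𝟙 X) ≫ cE (by simp [hS.assocObj]) (𝟙 U ⊗ₘ (B V W X).hom)
  /-- `A_{U,I,V} = B_{U,I,V}` -/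
  t1t : ∀ U V : C, A U (𝟙_ C) V = B U (𝟙_ C) V

/-- A twine on a strict monoidal category. -/
structure Twine (C : Type u) [Category.{v} C] [MonoidalCategory C]
    (hS : MonStrict C) where
  D : ∀ X Y : C, X ⊗ Y ≅ X ⊗ Y
  nat : ∀ {X Y X' Y' : C} (f : X ⟶ X') (g : Y ⟶ Y'),
    (f ⊗ₘ g) ≫ (D X' Y').hom = (D X Y).hom ≫ (f ⊗ₘ g)
  unit : (D (𝟙_ C) (𝟙_ C)).hom = 𝟙 (𝟙_ C ⊗ 𝟙_ C)
  /-- `(D_{X,Y} ⊗ id_Z) D_{X⊗Y,Z} = (id_X ⊗ D_{Y,Z}) D_{X,Y⊗Z}` -/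
  fus : ∀ X Y Z : C, (D (X ⊗ Y) Z).hom ≫ ((D X Y).hom ⊗ₘ 𝟙 Z)
    = cE (by simp [hS.assocObj]) ((D X (Y ⊗ Z)).hom ≫ (𝟙 X ⊗ₘ (D Y Z).hom))
  /-- the entwining axiom -/
  ent : ∀ X Y Z T : C,
    cE (by simp [hS.assocObj]) (𝟙 X ⊗ₘ (D Y (Z ⊗ T)).hom) ≫
      cE (by simp [hS.assocObj]) (𝟙 X ⊗ₘ ((D Y Z).inv ⊗ₘ 𝟙 T)) ≫
        ((D (X ⊗ Y) Z).hom ⊗ₘ 𝟙 T)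
    = ((D (X ⊗ Y) Z).hom ⊗ₘ 𝟙 T) ≫
        cE (by simp [hS.assocObj]) (𝟙 X ⊗ₘ ((D Y Z).inv ⊗ₘ 𝟙 T)) ≫
          cE (by simp [hS.assocObj]) (𝟙 X ⊗ₘ (D Y (Z ⊗ T)).hom)

/-- A strong twine on a strict monoidal category. -/
structure StrongTwine (C : Type u) [Category.{v} C] [MonoidalCategory C]
    (hS : MonStrict C) where
  D : ∀ X Y : C, X ⊗ Y ≅ X ⊗ Y
  nat : ∀ {X Y X' Y' : C} (f : X ⟶ X') (g : Y ⟶ Y'),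
    (f ⊗ₘ g) ≫ (D X' Y').hom = (D X Y).hom ≫ (f ⊗ₘ g)
  unit : (D (𝟙_ C) (𝟙_ C)).hom = 𝟙 (𝟙_ C ⊗ 𝟙_ C)
  /-- `(T_{U,V} ⊗ id_W) T_{U⊗V,W} = (id_U ⊗ T_{V,W}) T_{U,V⊗W}` -/
  fus : ∀ X Y Z : C, (D (X ⊗ Y) Z).hom ≫ ((D X Y).hom ⊗ₘ 𝟙 Z)
    = cE (by simp [hS.assocObj]) ((D X (Y ⊗ Z)).hom ≫ (𝟙 X ⊗ₘ (D Y Z).hom))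
  /-- `(T_{U,V} ⊗ id_W)(id_U ⊗ T_{V,W}) = (id_U ⊗ T_{V,W})(T_{U,V} ⊗ id_W)` -/
  comm : ∀ X Y Z : C,
    cE (by simp [hS.assocObj]) (𝟙 X ⊗ₘ (D Y Z).hom) ≫ ((D X Y).hom ⊗ₘ 𝟙 Z)
    = ((D X Y).hom ⊗ₘ 𝟙 Z) ≫ cE (by simp [hS.assocObj]) (𝟙 X ⊗ₘ (D Y Z).hom)

/-- A D-structure (consisting of isomorphisms) on a strict monoidal category. -/
structure DStructure (C : Type u) [Category.{v} C] [MonoidalCategory C]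
    (hS : MonStrict C) where
  R : ∀ X : C, X ≅ X
  nat : ∀ {X Y : C} (f : X ⟶ Y), f ≫ (R Y).hom = (R X).hom ≫ f
  unit : (R (𝟙_ C)).hom = 𝟙 (𝟙_ C)
  /-- `(R_{X⊗Y} ⊗ id_Z)(id_X ⊗ R_{Y⊗Z}) = (id_X ⊗ R_{Y⊗Z})(R_{X⊗Y} ⊗ id_Z)` -/
  comm : ∀ X Y Z : C,
    cE (by simp [hS.assocObj]) (𝟙 X ⊗ₘ (R (Y ⊗ Z)).hom) ≫ ((R (X ⊗ Y)).hom ⊗ₘ 𝟙 Z)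
    = ((R (X ⊗ Y)).hom ⊗ₘ 𝟙 Z) ≫ cE (by simp [hS.assocObj]) (𝟙 X ⊗ₘ (R (Y ⊗ Z)).hom)


/-! Putting the unit in the middle slot of the four fusion axioms of `(A, B)` expresses `D` of a
tensor product in two ways each: `D_{U⊗V,X}` is `id ⊗ D_{V,X}` followed by `A_{U,V,X}`, and also
`B_{U,V,X}` followed by `id ⊗ D_{V,X}`; dually for `D_{U,W⊗X}`. For `U = V = I` the first says
that `D_{I,X}` is an idempotent isomorphism, hence the identity; likewise `D_{X,I}`. In the
relation for `D`, expanding `D_{X⊗Y,Z}, D_{X,Y⊗Z}` through `A` and `D_{Y⊗Z,T}, D_{Y,Z⊗T}`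
through `B` turns the two sides into composites that differ only by the order of `A ⊗ id` and
`id ⊗ B`, which commute by the mixed axiom, and of `D_{X,Y} ⊗ id` and `id ⊗ D_{Z,T}`, which
commute by interchange. -/

section Transport

variable {K : Type*} [Category K]

@[simp] lemma cE_rfl {X : K} (h : X = X) (f : X ⟶ X) : cE h f = f := by
  simp [cE]

lemma cE_comp {X Y : K} (h : X = Y) (f g : Y ⟶ Y) :
    cE h (f ≫ g) = cE h f ≫ cE h g := by
  simp [cE]

lemma cE_cE {X Y Z : K} (h : X = Y) (h' : Y = Z) (f : Z ⟶ Z) :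
    cE h (cE h' f) = cE (h.trans h') f := by
  subst h h'; simp

lemma cE_comp_cE {X Y Z : K} (h : X = Y) (h' : X = Z) (f : Y ⟶ Y)
    (g : Z ⟶ Z) : cE h f ≫ cE h' g = cE h (f ≫ cE (h.symm.trans h') g) := by
  subst h h'; simp

lemma cE_inj {X Y : K} (h : X = Y) {f g : Y ⟶ Y} :
    cE h f = cE h g ↔ f = g := by
  subst h; simp

lemma id_tensorHom_cE {X Y Y' : C} (h : Y = Y') (g : Y' ⟶ Y') :
    𝟙 X ⊗ₘ cE h g = cE (by rw [h]) (𝟙 X ⊗ₘ g) := by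
  subst h; simp

lemma cE_tensorHom_id {X X' Y : C} (h : X = X') (f : X' ⟶ X') :
    cE h f ⊗ₘ 𝟙 Y = cE (by rw [h]) (f ⊗ₘ 𝟙 Y) := by
  subst h; simp

lemma cE_tensorHom_id_comm {E V W : C} (h : E = V ⊗ W) (f : V ⟶ V) (g : W ⟶ W) :
    cE h (f ⊗ₘ 𝟙 W) ≫ cE h (𝟙 V ⊗ₘ g) = cE h (𝟙 V ⊗ₘ g) ≫ cE h (f ⊗ₘ 𝟙 W) := by
  subst h
  simp only [cE_rfl, tensor_id_comp_id_tensor, id_tensor_comp_tensor_id]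

end Transport

namespace MonStrict

variable (hS : MonStrict C)

lemma tensorHom_tensorHom_eq_cE {X Y Z : C} (f : X ⟶ X) (g : Y ⟶ Y) (h : Z ⟶ Z) :
    (f ⊗ₘ g) ⊗ₘ h = cE (hS.assocObj X Y Z) (f ⊗ₘ (g ⊗ₘ h)) := by
  have := associator_naturality f g h
  rw [hS.assocHom] at this
  simp only [cE]
  rw [← Category.assoc, ← this]
  simp

lemma id_tensorHom_id_tensorHom {X Y W : C} (f : W ⟶ W) :
    𝟙 X ⊗ₘ (𝟙 Y ⊗ₘ f) = cE (hS.assocObj X Y W).symm (𝟙 (X ⊗ Y) ⊗ₘ f) := by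
  rw [← id_tensorHom_id, hS.tensorHom_tensorHom_eq_cE, cE_cE, cE_rfl]

lemma unit_tensorHom {V V' : C} (g : V ⟶ V') :
    𝟙 (𝟙_ C) ⊗ₘ g = eqToHom (hS.lidObj V) ≫ g ≫ eqToHom (hS.lidObj V').symm := by
  have := leftUnitor_naturality g
  rw [hS.lidHom, hS.lidHom] at this
  rw [id_tensorHom, ← Category.assoc, ← this]
  simp

lemma unit_tensorHom_eq_cE {V : C} (g : V ⟶ V) : 𝟙 (𝟙_ C) ⊗ₘ g = cE (hS.lidObj V) g :=
  hS.unit_tensorHom g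

lemma tensorHom_unit_eq_cE {V : C} (g : V ⟶ V) : g ⊗ₘ 𝟙 (𝟙_ C) = cE (hS.ridObj V) g := by
  have := rightUnitor_naturality g
  rw [hS.ridHom] at this
  rw [tensorHom_id, cE, ← Category.assoc, ← this]
  simp

lemma tensorHom_eq_tensorHom_unit_tensorHom {U U' V V' : C} (f : U ⟶ U') (g : V ⟶ V') :
    f ⊗ₘ g = eqToHom (by rw [hS.lidObj]) ≫ (f ⊗ₘ (𝟙 (𝟙_ C) ⊗ₘ g)) ≫
      eqToHom (by rw [hS.lidObj]) := by
  rw [hS.unit_tensorHom g, ← Category.id_comp f, ← Category.comp_id f,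
    ← tensorHom_comp_tensorHom, ← tensorHom_comp_tensorHom]
  simp

end MonStrict

namespace PureBraided

variable {hS : MonStrict C} (P : PureBraided C hS)

def D (U V : C) : U ⊗ V ⟶ U ⊗ V :=
  cE (by simp [hS.lidObj]) (P.A U (𝟙_ C) V).hom

lemma A_congr {U V W U' V' W' : C} (hU : U = U') (hV : V = V') (hW : W = W') :
    (P.A U V W).hom = cE (by rw [hU, hV, hW]) (P.A U' V' W').hom := by
  subst hU hV hW; simp

lemma B_congr {U V W U' V' W' : C} (hU : U = U') (hV : V = V') (hW : W = W') :
    (P.B U V W).hom = cE (by rw [hU, hV, hW]) (P.B U' V' W').hom := by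
  subst hU hV hW; simp

lemma D_congr {U V U' V' : C} (hU : U = U') (hV : V = V') :
    P.D U V = cE (by rw [hU, hV]) (P.D U' V') := by
  subst hU hV; simp

instance isIso_D (U V : C) : IsIso (P.D U V) := by
  rw [D, cE]; infer_instance

lemma A_unit_eq_cE_D (U V : C) :
    (P.A U (𝟙_ C) V).hom = cE (by simp [hS.lidObj]) (P.D U V) := by
  rw [D, cE_cE, cE_rfl]

lemma B_unit_eq_cE_D (U V : C) :
    (P.B U (𝟙_ C) V).hom = cE (by simp [hS.lidObj]) (P.D U V) := by
  rw [← P.t1t, A_unit_eq_cE_D]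

lemma D_naturality {U V U' V' : C} (f : U ⟶ U') (g : V ⟶ V') :
    (f ⊗ₘ g) ≫ P.D U' V' = P.D U V ≫ (f ⊗ₘ g) := by
  simp only [D, cE, hS.tensorHom_eq_tensorHom_unit_tensorHom f g, Category.assoc,
    eqToHom_trans_assoc, eqToHom_refl, Category.id_comp]
  rw [reassoc_of% P.natA f (𝟙 _) g]

lemma D_tensor_left_eq_A (U V X : C) :
    P.D (U ⊗ V) X = cE (hS.assocObj U V X) ((𝟙 U ⊗ₘ P.D V X) ≫ (P.A U V X).hom) := by
  rw [D, P.a1 U V (𝟙_ C) X, A_unit_eq_cE_D, P.A_congr rfl (hS.ridObj V) rfl]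
  simp only [id_tensorHom_cE, cE_cE, cE_comp_cE, cE_rfl]

lemma D_tensor_left_eq_B (U V X : C) :
    P.D (U ⊗ V) X = cE (hS.assocObj U V X) ((P.B U V X).hom ≫ (𝟙 U ⊗ₘ P.D V X)) := by
  rw [D, P.t1t, P.baba U V (𝟙_ C) X, B_unit_eq_cE_D, P.B_congr rfl (hS.ridObj V) rfl]
  simp only [id_tensorHom_cE, cE_cE, cE_comp_cE, cE_rfl]

lemma D_tensor_right_eq_A (U W X : C) :
    P.D U (W ⊗ X) = (P.A U W X).hom ≫ cE (hS.assocObj U W X).symm (P.D U W ⊗ₘ 𝟙 X) := by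
  rw [D, P.a2 U (𝟙_ C) W X, A_unit_eq_cE_D, P.A_congr rfl (hS.lidObj W) rfl]
  simp only [cE_tensorHom_id, cE_cE, cE_comp_cE, cE_rfl]

lemma D_tensor_right_eq_B (U W X : C) :
    P.D U (W ⊗ X) = cE (hS.assocObj U W X).symm (P.D U W ⊗ₘ 𝟙 X) ≫ (P.B U W X).hom := by
  rw [D, P.t1t, P.b2 U (𝟙_ C) W X, B_unit_eq_cE_D, P.B_congr rfl (hS.lidObj W) rfl]
  simp only [cE_tensorHom_id, cE_cE, cE_comp_cE]
  rw [cE_comp, cE_cE, cE_rfl]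

lemma D_unit_left (X : C) : P.D (𝟙_ C) X = 𝟙 (𝟙_ C ⊗ X) := by
  have h := P.D_tensor_left_eq_A (𝟙_ C) (𝟙_ C) X
  rw [P.D_congr (hS.lidObj (𝟙_ C)) rfl, A_unit_eq_cE_D, hS.unit_tensorHom_eq_cE] at h
  simp only [cE_comp_cE, cE_cE, cE_rfl, cE_inj] at h
  exact (cancel_epi (P.D (𝟙_ C) X)).mp (by rw [← h, Category.comp_id])

lemma D_unit_right (X : C) : P.D X (𝟙_ C) = 𝟙 (X ⊗ 𝟙_ C) := by
  have h := P.D_tensor_right_eq_A X (𝟙_ C) (𝟙_ C)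
  rw [P.D_congr rfl (hS.lidObj (𝟙_ C)), A_unit_eq_cE_D, hS.tensorHom_unit_eq_cE] at h
  simp only [cE_comp_cE, cE_cE, cE_rfl, cE_inj] at h
  exact (cancel_epi (P.D X (𝟙_ C))).mp (by rw [← h, Category.comp_id])

lemma cab_cE (X Y Z T : C) {E : C} (h₁ : E = (X ⊗ (Y ⊗ Z)) ⊗ T)
    (h₂ : E = X ⊗ (Y ⊗ (Z ⊗ T))) :
    cE h₂ (𝟙 X ⊗ₘ (P.B Y Z T).hom) ≫ cE h₁ ((P.A X Y Z).hom ⊗ₘ 𝟙 T)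
    = cE h₁ ((P.A X Y Z).hom ⊗ₘ 𝟙 T) ≫ cE h₂ (𝟙 X ⊗ₘ (P.B Y Z T).hom) := by
  subst h₁
  simpa only [cE_rfl] using P.cab X Y Z T

lemma D_tensor_tensor (X Y Z T : C) :
    (P.D (X ⊗ Y) Z ⊗ₘ 𝟙 T) ≫
      cE (by simp [hS.assocObj]) (𝟙 X ⊗ₘ P.D (Y ⊗ Z) T) ≫
        ((P.D X Y ⊗ₘ 𝟙 Z) ⊗ₘ 𝟙 T)
    = cE (by simp [hS.assocObj]) (𝟙 X ⊗ₘ P.D Y (Z ⊗ T)) ≫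
        cE (by simp [hS.assocObj]) (P.D X (Y ⊗ Z) ⊗ₘ 𝟙 T) ≫
          cE (by simp [hS.assocObj]) (𝟙 (X ⊗ Y) ⊗ₘ P.D Z T) := by
  rw [P.D_tensor_left_eq_A X Y Z, P.D_tensor_left_eq_B Y Z T, P.D_tensor_right_eq_A X Y Z,
    P.D_tensor_right_eq_B Y Z T]
  simp only [cE_tensorHom_id, id_tensorHom_cE, comp_tensor_id, id_tensor_comp, cE_comp,
    cE_cE, hS.tensorHom_tensorHom_eq_cE, hS.id_tensorHom_id_tensorHom, id_tensorHom_id,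
    Category.assoc]
  have hAB := P.cab_cE X Y Z T (E := ((X ⊗ Y) ⊗ Z) ⊗ T)
    (by simp [hS.assocObj]) (by simp [hS.assocObj])
  have hDD := cE_tensorHom_id_comm (E := ((X ⊗ Y) ⊗ Z) ⊗ T) (by simp [hS.assocObj])
    (P.D X Y) (P.D Z T)
  rw [hDD, reassoc_of% hAB]

end PureBraided

/-- From a pure-braided structure `(A, B)`, the family `D_{U,V} := A_{U,I,V} = B_{U,I,V}`
is a natural isomorphism satisfying `D_{I,X} = D_{X,I} = id_X` and the fused relation. -/
theorem stmt10 (hS : MonStrict C) (P : PureBraided C hS)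
    (Dm : ∀ U V : C, U ⊗ V ⟶ U ⊗ V)
    (hDm : ∀ U V : C, Dm U V = cE (by simp [hS.lidObj]) (P.A U (𝟙_ C) V).hom) :
    (∀ {U V U' V' : C} (f : U ⟶ U') (g : V ⟶ V'),
      (f ⊗ₘ g) ≫ Dm U' V' = Dm U V ≫ (f ⊗ₘ g)) ∧
    (∀ U V : C, IsIso (Dm U V)) ∧
    (∀ X : C, Dm (𝟙_ C) X = 𝟙 (𝟙_ C ⊗ X)) ∧
    (∀ X : C, Dm X (𝟙_ C) = 𝟙 (X ⊗ 𝟙_ C)) ∧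
    (∀ X Y Z T : C,
      (Dm (X ⊗ Y) Z ⊗ₘ 𝟙 T) ≫
        cE (by simp [hS.assocObj]) (𝟙 X ⊗ₘ Dm (Y ⊗ Z) T) ≫
          ((Dm X Y ⊗ₘ 𝟙 Z) ⊗ₘ 𝟙 T)
      = cE (by simp [hS.assocObj]) (𝟙 X ⊗ₘ Dm Y (Z ⊗ T)) ≫
          cE (by simp [hS.assocObj]) (Dm X (Y ⊗ Z) ⊗ₘ 𝟙 T) ≫
            cE (by simp [hS.assocObj]) (𝟙 (X ⊗ Y) ⊗ₘ Dm Z T)) := by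
  obtain rfl : Dm = P.D := funext₂ hDm
  exact ⟨P.D_naturality, P.isIso_D, P.D_unit_left, P.D_unit_right, P.D_tensor_tensor⟩
end
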